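/- A Heinlein wall of size r has treewidth at most 5. -/

import Mathlib

/-- Vertices of a Heinlein wall of size `r`: path vertices `u j i` (path `j`,
position `i`, both 0-based), bottleneck vertices `z t` (`t = 0, …, r`), and the
terminals `a`, `b`.  We write `c = z 0` and `d = z r`. -/
inductive HWVert (r : ℕ) where
  | u : Fin r → Fin (2 * r) → HWVert r
  | z : Fin (r + 1) → HWVert r
  | a : HWVert r
  | b : HWVert r
deriving DecidableEq

/-- The defining relation of the Heinlein wall (paper 1-based indices translated
to 0-based ones): `u j i — u j (i+1)`; `z t — u j i` for `i` even iff `t = j`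
and for `i` odd iff `t = j + 1`; `z t — z (t+1)`; `a — u j 0`; `b — u j (2r-1)`. -/
def HWRel (r : ℕ) : HWVert r → HWVert r → Prop := fun x y =>
  match x, y with
  | .u j i, .u j' i' => j = j' ∧ i'.val = i.val + 1
  | .z t, .u j i => (i.val % 2 = 0 ∧ t.val = j.val) ∨ (i.val % 2 = 1 ∧ t.val = j.val + 1)
  | .z t, .z t' => t'.val = t.val + 1
  | .a, .u _ i => i.val = 0
  | .b, .u _ i => i.val = 2 * r - 1
  | _, _ => False

/-- The Heinlein wall of size `r`. -/
def HW (r : ℕ) : SimpleGraph (HWVert r) := SimpleGraph.fromRel (HWRel r)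

/-!
Order the paths `P^j`, and the `2r - 1` edges along each path, lexicographically, and give the
edge `u^j_e u^j_{e+1}` the bag `{a*, b*, z_j, z_{j+1}, u^j_e, u^j_{e+1}}` (0-based indices).
Taken in this order the bags form a path decomposition of width `5`: a path vertex lies only in
the bags of its at most two incident path edges, which are consecutive; `z_t` lies only in the
bags of the blocks `P^{t-1}` and `P^t`, which are consecutive; and `a*`, `b*` lie in every bag.
-/

namespace SimpleGraph

theorem hasse_nat_adj {m n : ℕ} : (hasse ℕ).Adj m n ↔ m + 1 = n ∨ n + 1 = m := by
  simp

theorem Walk.mem_support_of_mem_uIcc {a b k : ℕ} (p : (hasse ℕ).Walk a b)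
    (hk : k ∈ Set.uIcc a b) : k ∈ p.support := by
  rw [Set.mem_uIcc] at hk
  induction p with
  | nil => simp only [Walk.support_nil, List.mem_singleton]; omega
  | @cons u v w h p ih =>
    have := hasse_nat_adj.1 h
    rw [Walk.support_cons, List.mem_cons]
    by_cases hku : k = u
    · exact Or.inl hku
    · exact Or.inr (ih (by omega))

theorem Walk.IsPath.mem_uIcc_of_mem_support {a b k : ℕ} {p : (hasse ℕ).Walk a b}
    (hp : p.IsPath) (hk : k ∈ p.support) : k ∈ Set.uIcc a b := by
  induction p with
  | nil => simp_all
  | @cons u v w h p ih =>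
    rw [Walk.cons_isPath_iff] at hp
    rw [Walk.support_cons, List.mem_cons] at hk
    rcases hk with rfl | hk
    · exact Set.left_mem_uIcc
    have hkvw := Set.mem_uIcc.1 (ih hp.1 hk)
    rw [Set.mem_uIcc]
    by_contra hkuw
    have := hasse_nat_adj.1 h
    exact hp.2 (p.mem_support_of_mem_uIcc (Set.mem_uIcc.2 (by omega)))

theorem hasse_nat_isAcyclic : (hasse ℕ).IsAcyclic := by
  rw [isAcyclic_iff_forall_adj_isBridge]
  suffices h : ∀ m, (hasse ℕ).IsBridge s(m, m + 1) by
    intro m n hmn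
    rcases hasse_nat_adj.1 hmn with rfl | rfl
    · exact h m
    · rw [Sym2.eq_swap]; exact h n
  intro m
  rw [isBridge_iff_forall_walk_mem_edges]
  intro p
  obtain ⟨d, hd, hm, hm'⟩ := p.exists_boundary_dart {k | k ≤ m} (by simp) (by simp)
  have hedge : d.edge = s(m, m + 1) := by
    have := hasse_nat_adj.1 d.adj
    simp only [Set.mem_ofPred_eq] at hm hm'
    rw [Dart.edge, Sym2.eq_iff]
    omega
  exact hedge ▸ List.mem_map_of_mem hd

theorem hasse_nat_isTree : (hasse ℕ).IsTree :=
  ⟨⟨hasse_preconnected_of_succ ℕ⟩, hasse_nat_isAcyclic⟩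

end SimpleGraph

namespace HW

variable {r : ℕ}

/-- Position `j * (2r - 1) + e` stands for the edge `u^j_e u^j_{e+1}`; later positions repeat
the last edge. -/
def clampedPos (r n : ℕ) : ℕ := min n (r * (2 * r - 1) - 1)

def pathIdx (r n : ℕ) : ℕ := clampedPos r n / (2 * r - 1)

def edgeIdx (r n : ℕ) : ℕ := clampedPos r n % (2 * r - 1)

theorem clampedPos_mono : Monotone (clampedPos r) := fun _ _ h => min_le_min h le_rfl

theorem pathIdx_mono : Monotone (pathIdx r) := fun _ _ h =>
  Nat.div_le_div_right (clampedPos_mono h)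

theorem pathIdx_mul_add_edgeIdx (n : ℕ) :
    pathIdx r n * (2 * r - 1) + edgeIdx r n = clampedPos r n :=
  Nat.div_add_mod' _ _

theorem pathIdx_lt (hr : 1 ≤ r) (n : ℕ) : pathIdx r n < r := by
  have : 2 * r - 1 ≤ r * (2 * r - 1) := Nat.le_mul_of_pos_left _ hr
  rw [pathIdx, Nat.div_lt_iff_lt_mul (by omega), clampedPos]
  omega

theorem edgeIdx_lt (hr : 1 ≤ r) (n : ℕ) : edgeIdx r n < 2 * r - 1 :=
  Nat.mod_lt _ (by omega)

theorem pathIdx_edgeIdx_of_lt {j e : ℕ} (hj : j < r) (he : e < 2 * r - 1) :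
    pathIdx r (j * (2 * r - 1) + e) = j ∧ edgeIdx r (j * (2 * r - 1) + e) = e := by
  have : j * (2 * r - 1) ≤ r * (2 * r - 1) - (2 * r - 1) := by
    rw [← Nat.sub_one_mul]; exact Nat.mul_le_mul_right _ (by omega)
  have hpos : clampedPos r (j * (2 * r - 1) + e) = j * (2 * r - 1) + e := by
    have : 2 * r - 1 ≤ r * (2 * r - 1) := Nat.le_mul_of_pos_left _ (by omega)
    rw [clampedPos]; omega
  rw [pathIdx, edgeIdx, hpos, Nat.div_mod_unique (by omega)]
  exact ⟨by ring, he⟩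

def cell (j : Fin r) (e : ℕ) (he : e < 2 * r - 1) : Finset (HWVert r) :=
  {.a, .b, .z j.castSucc, .z j.succ, .u j ⟨e, by omega⟩, .u j ⟨e + 1, by omega⟩}

def bag (hr : 1 ≤ r) (n : ℕ) : Finset (HWVert r) :=
  cell ⟨pathIdx r n, pathIdx_lt hr n⟩ (edgeIdx r n) (edgeIdx_lt hr n)

section cell

variable {j : Fin r} {e : ℕ} {he : e < 2 * r - 1}

@[simp] theorem a_mem_cell : HWVert.a ∈ cell j e he := by simp [cell]

@[simp] theorem b_mem_cell : HWVert.b ∈ cell j e he := by simp [cell]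

theorem z_mem_cell {t : Fin (r + 1)} : .z t ∈ cell j e he ↔ t.val = j ∨ t.val = j + 1 := by
  simp [cell, Fin.ext_iff]

theorem u_mem_cell {j' : Fin r} {i : Fin (2 * r)} :
    .u j' i ∈ cell j e he ↔ j' = j ∧ (i.val = e ∨ i.val = e + 1) := by
  simp [cell, Fin.ext_iff]
  tauto

end cell

theorem bag_mul_add (hr : 1 ≤ r) (j : Fin r) {e : ℕ} (he : e < 2 * r - 1) :
    bag hr (j * (2 * r - 1) + e) = cell j e he := by
  obtain ⟨hj, he'⟩ := pathIdx_edgeIdx_of_lt j.isLt he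
  simp only [bag, hj, he']

theorem bag_eq_of_clampedPos_eq (hr : 1 ≤ r) {m n : ℕ} (h : clampedPos r m = clampedPos r n) :
    bag hr m = bag hr n := by
  simp only [bag, pathIdx, edgeIdx, h]

theorem card_bag_le (hr : 1 ≤ r) (n : ℕ) : (bag hr n).card ≤ 6 :=
  Finset.card_le_six

theorem ordConnected_setOf_mem_bag (hr : 1 ≤ r) (v : HWVert r) :
    {n | v ∈ bag hr n}.OrdConnected := by
  refine ⟨fun n₁ h₁ n₂ h₂ k hk => ?_⟩
  simp only [Set.mem_ofPred_eq] at h₁ h₂ ⊢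
  cases v with
  | a => exact a_mem_cell
  | b => exact b_mem_cell
  | z t =>
    simp only [bag, z_mem_cell] at h₁ h₂ ⊢
    have := pathIdx_mono (r := r) hk.1
    have := pathIdx_mono (r := r) hk.2
    omega
  | u j i =>
    -- both positions encode an edge of `P^j` at `u^j_i`, so they are at most one apart
    have hclose : clampedPos r n₂ ≤ clampedPos r n₁ + 1 := by
      simp only [bag, u_mem_cell, Fin.ext_iff] at h₁ h₂
      rw [← pathIdx_mul_add_edgeIdx, ← pathIdx_mul_add_edgeIdx, ← h₁.1, ← h₂.1]
      omega
    have := clampedPos_mono (r := r) hk.1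
    have := clampedPos_mono (r := r) hk.2
    obtain h | h : clampedPos r k = clampedPos r n₁ ∨ clampedPos r k = clampedPos r n₂ := by
      omega
    · rwa [bag_eq_of_clampedPos_eq hr h]
    · rwa [bag_eq_of_clampedPos_eq hr h]

theorem exists_mem_cell (hr : 1 ≤ r) (v : HWVert r) : ∃ j e he, v ∈ cell j e he := by
  cases v with
  | a => exact ⟨⟨0, hr⟩, 0, by omega, a_mem_cell⟩
  | b => exact ⟨⟨0, hr⟩, 0, by omega, b_mem_cell⟩
  | z t =>
    exact ⟨⟨min t (r - 1), by omega⟩, 0, by omega, z_mem_cell.2 (by dsimp only; omega)⟩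
  | u j i => exact ⟨j, min i (2 * r - 2), by omega, u_mem_cell.2 ⟨rfl, by omega⟩⟩

theorem exists_cell_of_rel {x y : HWVert r} (h : HWRel r x y) :
    ∃ j e he, x ∈ cell j e he ∧ y ∈ cell j e he := by
  cases x <;> cases y <;> simp only [HWRel] at h
  case u.u j i j' i' =>
    obtain ⟨rfl, h⟩ := h
    exact ⟨j, i, by omega, u_mem_cell.2 ⟨rfl, by omega⟩, u_mem_cell.2 ⟨rfl, by omega⟩⟩
  case z.u t j i =>
    exact ⟨j, min i (2 * r - 2), by omega, z_mem_cell.2 (by omega),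
      u_mem_cell.2 ⟨rfl, by omega⟩⟩
  case z.z t t' =>
    exact ⟨⟨t, by omega⟩, 0, by omega, z_mem_cell.2 (Or.inl rfl),
      z_mem_cell.2 (by dsimp only; omega)⟩
  case a.u j i => exact ⟨j, 0, by omega, a_mem_cell, u_mem_cell.2 ⟨rfl, by omega⟩⟩
  case b.u j i => exact ⟨j, 2 * r - 2, by omega, b_mem_cell, u_mem_cell.2 ⟨rfl, by omega⟩⟩

theorem exists_mem_bag (hr : 1 ≤ r) (v : HWVert r) : ∃ n, v ∈ bag hr n := by
  obtain ⟨j, e, he, hv⟩ := exists_mem_cell hr v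
  exact ⟨_, bag_mul_add hr j he ▸ hv⟩

theorem exists_mem_bag_of_adj (hr : 1 ≤ r) {x y : HWVert r} (h : (HW r).Adj x y) :
    ∃ n, x ∈ bag hr n ∧ y ∈ bag hr n := by
  rw [HW, SimpleGraph.fromRel_adj] at h
  obtain ⟨j, e, he, hx, hy⟩ | ⟨j, e, he, hy, hx⟩ :=
    h.2.imp exists_cell_of_rel exists_cell_of_rel <;>
  exact ⟨_, bag_mul_add hr j he ▸ hx, bag_mul_add hr j he ▸ hy⟩

end HW

/-- A Heinlein wall of size `r ≥ 1` has treewidth at most `5`: it admits a tree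
decomposition all of whose bags have at most `5 + 1 = 6` vertices. -/
theorem heinleinWall_treewidth_le_five (r : ℕ) (hr : 1 ≤ r) :
    ∃ (ι : Type) (T : SimpleGraph ι), T.IsTree ∧
      ∃ Bags : ι → Finset (HWVert r),
        (∀ v, ∃ i, v ∈ Bags i) ∧
        (∀ x y, (HW r).Adj x y → ∃ i, x ∈ Bags i ∧ y ∈ Bags i) ∧
        (∀ (v : HWVert r) (i j k : ι) (p : T.Walk i j), p.IsPath →
          v ∈ Bags i → v ∈ Bags j → k ∈ p.support → v ∈ Bags k) ∧
        (∀ i, (Bags i).card ≤ 5 + 1) := by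
  refine ⟨ℕ, SimpleGraph.hasse ℕ, SimpleGraph.hasse_nat_isTree, HW.bag hr,
    HW.exists_mem_bag hr, fun _ _ => HW.exists_mem_bag_of_adj hr, ?_, HW.card_bag_le hr⟩
  intro v i j k p hp hi hj hk
  exact (HW.ordConnected_setOf_mem_bag hr v).uIcc_subset hi hj (hp.mem_uIcc_of_mem_support hk)
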